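/- arXiv:2111.01960 — 3 statements merged into one kernel-verified Lean document; each statement's English description precedes it below -/
import Mathlib

section
/- Let R_1, R_2 : ℝ → ℂ be differentiable and suppose R = (R_1, R_2) satisfies the 2×2 radial system T_rad R = E R with T_rad = [[d_-, m r/ϖ - iλ/ϖ],[m r/ϖ + iλ/ϖ, -d_+]], where d_± = -i d/dr ± (-aκ + γ' r)/ϖ², ϖ = √(r²+a²), and E, λ, a, κ, γ' are real, a > 0. Then d/dr(|R_1|² - |R_2|²) = 0; in particular, if |R_1(r_0)| = |R_2(r_0)| at one point r_0, then |R_1(r)| = |R_2(r)| for all r. -/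
open Real Complex

/-- For the zGKN radial system `T_rad R = E R` with real parameters,
`d/dr (|R₁|² − |R₂|²) = 0`, hence if `|R₁| = |R₂|` at one point it holds everywhere. -/
theorem zgkn_radial_modulus_equal
    (m E lam a kap gam : ℝ) (ha : 0 < a)
    (R1 R2 : ℝ → ℂ) (hR1 : Differentiable ℝ R1) (hR2 : Differentiable ℝ R2)
    (heq1 : ∀ r : ℝ,
      (-Complex.I) * deriv R1 r
        - (((-a * kap + gam * r) / (r ^ 2 + a ^ 2) : ℝ) : ℂ) * R1 r
        + (((m * r / Real.sqrt (r ^ 2 + a ^ 2) : ℝ) : ℂ)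
            - Complex.I * ((lam / Real.sqrt (r ^ 2 + a ^ 2) : ℝ) : ℂ)) * R2 r
      = (E : ℂ) * R1 r)
    (heq2 : ∀ r : ℝ,
      (((m * r / Real.sqrt (r ^ 2 + a ^ 2) : ℝ) : ℂ)
          + Complex.I * ((lam / Real.sqrt (r ^ 2 + a ^ 2) : ℝ) : ℂ)) * R1 r
        - ((-Complex.I) * deriv R2 r
            + (((-a * kap + gam * r) / (r ^ 2 + a ^ 2) : ℝ) : ℂ) * R2 r)
      = (E : ℂ) * R2 r) :
    (∀ r : ℝ, deriv (fun s => ‖R1 s‖ ^ 2 - ‖R2 s‖ ^ 2) r = 0) ∧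
    ((∃ r0 : ℝ, ‖R1 r0‖ = ‖R2 r0‖) →
      ∀ r : ℝ, ‖R1 r‖ = ‖R2 r‖) := by
  have hfun : (fun s => ‖R1 s‖ ^ 2 - ‖R2 s‖ ^ 2)
      = fun s => ((R1 s).re ^ 2 + (R1 s).im ^ 2) - ((R2 s).re ^ 2 + (R2 s).im ^ 2) := by
    funext s
    rw [Complex.sq_norm, Complex.sq_norm, Complex.normSq_apply, Complex.normSq_apply]
    ring
  have key : ∀ r : ℝ, HasDerivAt (fun s => ‖R1 s‖ ^ 2 - ‖R2 s‖ ^ 2) 0 r := by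
    intro r
    set b : ℝ := (-a * kap + gam * r) / (r ^ 2 + a ^ 2) with hb
    set c : ℝ := m * r / Real.sqrt (r ^ 2 + a ^ 2) with hc
    set d : ℝ := lam / Real.sqrt (r ^ 2 + a ^ 2) with hd
    have h1 : HasDerivAt R1 (deriv R1 r) r := (hR1 r).hasDerivAt
    have h2 : HasDerivAt R2 (deriv R2 r) r := (hR2 r).hasDerivAt
    have hd1 : deriv R1 r = Complex.I * (((E : ℂ) + (b : ℂ)) * R1 r - ((c : ℂ) - Complex.I * (d : ℂ)) * R2 r) := by
      have := heq1 r
      have h := congrArg (fun z => Complex.I * z) this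
      rw [show Complex.I * (-Complex.I * deriv R1 r - (b : ℂ) * R1 r
          + (((c : ℝ) : ℂ) - Complex.I * ((d : ℝ) : ℂ)) * R2 r)
        = deriv R1 r + Complex.I * (-(b : ℂ) * R1 r + ((c : ℂ) - Complex.I * (d : ℂ)) * R2 r) by
          ring_nf; rw [Complex.I_sq]; ring] at h
      linear_combination h
    have hd2 : deriv R2 r = -Complex.I * (((E : ℂ) + (b : ℂ)) * R2 r - ((c : ℂ) + Complex.I * (d : ℂ)) * R1 r) := by
      have := heq2 r
      have h := congrArg (fun z => -Complex.I * z) this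
      rw [show -Complex.I * ((((c : ℝ) : ℂ) + Complex.I * ((d : ℝ) : ℂ)) * R1 r
          - (-Complex.I * deriv R2 r + (b : ℂ) * R2 r))
        = deriv R2 r + -Complex.I * (((c : ℂ) + Complex.I * (d : ℂ)) * R1 r - (b : ℂ) * R2 r) by
          ring_nf; rw [Complex.I_sq]; ring] at h
      linear_combination h
    rw [hd1] at h1
    rw [hd2] at h2
    have hre1 : HasDerivAt (fun s => (R1 s).re)
        (Complex.I * (((E : ℂ) + (b : ℂ)) * R1 r - ((c : ℂ) - Complex.I * (d : ℂ)) * R2 r)).re r :=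
      Complex.reCLM.hasFDerivAt.comp_hasDerivAt r h1
    have him1 : HasDerivAt (fun s => (R1 s).im)
        (Complex.I * (((E : ℂ) + (b : ℂ)) * R1 r - ((c : ℂ) - Complex.I * (d : ℂ)) * R2 r)).im r :=
      Complex.imCLM.hasFDerivAt.comp_hasDerivAt r h1
    have hre2 : HasDerivAt (fun s => (R2 s).re)
        (-Complex.I * (((E : ℂ) + (b : ℂ)) * R2 r - ((c : ℂ) + Complex.I * (d : ℂ)) * R1 r)).re r :=
      Complex.reCLM.hasFDerivAt.comp_hasDerivAt r h2
    have him2 : HasDerivAt (fun s => (R2 s).im)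
        (-Complex.I * (((E : ℂ) + (b : ℂ)) * R2 r - ((c : ℂ) + Complex.I * (d : ℂ)) * R1 r)).im r :=
      Complex.imCLM.hasFDerivAt.comp_hasDerivAt r h2
    have hf := (((hre1.fun_pow 2).add (him1.fun_pow 2)).sub ((hre2.fun_pow 2).add (him2.fun_pow 2)))
    rw [hfun]
    refine hf.congr_deriv ?_
    simp only [Complex.mul_re, Complex.mul_im, Complex.sub_re, Complex.sub_im,
      Complex.add_re, Complex.add_im, Complex.I_re, Complex.I_im,
      Complex.ofReal_re, Complex.ofReal_im, Complex.neg_re, Complex.neg_im]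
    ring
  constructor
  · intro r
    exact (key r).deriv
  · rintro ⟨r0, hr0⟩ r
    have hconst := is_const_of_deriv_eq_zero (f := fun s => ‖R1 s‖ ^ 2 - ‖R2 s‖ ^ 2)
      (fun x => (key x).differentiableAt) (fun x => (key x).deriv) r r0
    have h0 : ‖R1 r‖ ^ 2 - ‖R2 r‖ ^ 2 = 0 := by
      rw [hconst, hr0]; ring
    nlinarith [norm_nonneg (R1 r), norm_nonneg (R2 r)]
end

section
/- Define S_1 = S cos(Θ/2), S_2 = S sin(Θ/2) for differentiable real functions S > 0 and Θ of θ ∈ (0,π). Then (S_1,S_2) satisfies the angular eigenvalue equation T_ang (S_1,S_2)ᵀ = λ (S_1,S_2)ᵀ with T_ang = [[ma cos θ, l_-],[−l_+, −ma cos θ]], l_± = d/dθ ± (aE sin θ − κ csc θ), if and only if Θ and S satisfy dΘ/dθ = −2ma cos θ cos Θ + 2(aE sin θ − κ/sin θ) sin Θ + 2λ and d(ln S)/dθ = −ma cos θ sin Θ − (aE sin θ − κ/sin θ) cos Θ. -/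
open Real

/-- With `S₁ = S cos(Θ/2)`, `S₂ = S sin(Θ/2)` (`S > 0` differentiable on `(0,π)`),
`(S₁,S₂)` solves `T_ang (S₁,S₂)ᵀ = λ (S₁,S₂)ᵀ` iff `(Θ, S)` solve the angular Prüfer equations. -/
theorem zgkn_angular_prufer_equiv
    (m a E kap lam : ℝ)
    (S Θ : ℝ → ℝ)
    (hS : ∀ θ ∈ Set.Ioo 0 Real.pi, DifferentiableAt ℝ S θ)
    (hΘ : ∀ θ ∈ Set.Ioo 0 Real.pi, DifferentiableAt ℝ Θ θ)
    (hSpos : ∀ θ ∈ Set.Ioo 0 Real.pi, 0 < S θ) :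
    ∀ θ ∈ Set.Ioo 0 Real.pi,
      ((let S1 : ℝ → ℝ := fun t => S t * Real.cos (Θ t / 2)
        let S2 : ℝ → ℝ := fun t => S t * Real.sin (Θ t / 2)
        (m * a * Real.cos θ * S1 θ
            + (deriv S2 θ - (a * E * Real.sin θ - kap / Real.sin θ) * S2 θ)
          = lam * S1 θ) ∧
        (-(deriv S1 θ + (a * E * Real.sin θ - kap / Real.sin θ) * S1 θ)
            - m * a * Real.cos θ * S2 θ
          = lam * S2 θ))
      ↔
      ((deriv Θ θ = -2 * m * a * Real.cos θ * Real.cos (Θ θ)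
            + 2 * (a * E * Real.sin θ - kap / Real.sin θ) * Real.sin (Θ θ) + 2 * lam) ∧
       (deriv (fun t => Real.log (S t)) θ
          = -(m * a) * Real.cos θ * Real.sin (Θ θ)
            - (a * E * Real.sin θ - kap / Real.sin θ) * Real.cos (Θ θ)))) := by
  intro θ hθ
  have hSθ := (hS θ hθ).hasDerivAt
  have hΘθ := (hΘ θ hθ).hasDerivAt
  have hSpos' := hSpos θ hθ
  have hSne : S θ ≠ 0 := ne_of_gt hSpos'
  have hhalf : HasDerivAt (fun t => Θ t / 2) (deriv Θ θ / 2) θ := hΘθ.div_const 2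
  set c := Real.cos (Θ θ / 2) with hc
  set s := Real.sin (Θ θ / 2) with hs
  have hd1 : deriv (fun t => S t * Real.cos (Θ t / 2)) θ
      = deriv S θ * c + S θ * (-s * (deriv Θ θ / 2)) :=
    (hSθ.mul hhalf.cos).deriv
  have hd2 : deriv (fun t => S t * Real.sin (Θ t / 2)) θ
      = deriv S θ * s + S θ * (c * (deriv Θ θ / 2)) :=
    (hSθ.mul hhalf.sin).deriv
  have hlog : deriv (fun t => Real.log (S t)) θ = deriv S θ / S θ :=
    (hSθ.log hSne).deriv
  have pyth : s ^ 2 + c ^ 2 = 1 := Real.sin_sq_add_cos_sq _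
  have hcosT : Real.cos (Θ θ) = c ^ 2 - s ^ 2 := by
    rw [show Θ θ = 2 * (Θ θ / 2) by ring, Real.cos_two_mul']
  have hsinT : Real.sin (Θ θ) = 2 * s * c := by
    rw [show Θ θ = 2 * (Θ θ / 2) by ring, Real.sin_two_mul]
  dsimp only
  rw [hd1, hd2, hlog, hcosT, hsinT]
  constructor
  · rintro ⟨e1, e2⟩
    constructor
    · have h1 : S θ * deriv Θ θ
          = S θ * (-2 * m * a * Real.cos θ * (c ^ 2 - s ^ 2)
              + 2 * (a * E * Real.sin θ - kap / Real.sin θ) * (2 * s * c) + 2 * lam) := by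
        linear_combination (2 * c) * e1 + (2 * s) * e2
          - (S θ * deriv Θ θ - 2 * lam * S θ) * pyth
      exact mul_left_cancel₀ hSne h1
    · rw [div_eq_iff hSne]
      linear_combination s * e1 - c * e2 - deriv S θ * pyth
  · rintro ⟨g1, g2⟩
    rw [div_eq_iff hSne] at g2
    constructor
    · linear_combination s * g2 + (S θ * c / 2) * g1
        + ((a * E * Real.sin θ - kap / Real.sin θ) * S θ * s
            - m * a * Real.cos θ * S θ * c) * pyth
    · linear_combination (-c) * g2 + (S θ * s / 2) * g1
        + (m * a * Real.cos θ * S θ * s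
            + (a * E * Real.sin θ - kap / Real.sin θ) * S θ * c) * pyth
end

section
/- For κ > 0 a half-integer and N a nonzero integer, the pair S_{N,κ}(θ) = sin^{κ+1/2}θ · ( −√(cot(θ/2)) P_{|N|−1}^{(κ−1/2, κ+1/2)}(cos θ), sgn(N) √(tan(θ/2)) P_{|N|−1}^{(κ+1/2, κ−1/2)}(cos θ) ) is an eigenfunction of 𝔞_κ = iσ₂ d/dθ + (κ/sin θ)σ₁ on (0,π) with eigenvalue k = −sgn(N)(|N| + κ − 1/2). (It suffices to verify this for N = 1, i.e. P_0 ≡ 1.) -/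
/-!
With `s = sin (θ/2)`, `c = cos (θ/2)` and `sin θ = 2 s c`, the two components are
`2^(κ+1/2) s^(κ+1) c^κ` and `-2^(κ+1/2) s^κ c^(κ+1)`. The logarithmic derivative of
`s^a c^b` is `(a c² - b s²) / sin θ`; adding `κ / sin θ` and using `s² + c² = 1` turns the
numerator into `(2κ+1) c²` for the second component and `-(2κ+1) s²` for the first, and
division by `sin θ = 2 s c` then trades one power of `c` for one of `s` or vice versa.
-/

open Real

noncomputable def halfAngleMonomial (a b x : ℝ) : ℝ := sin (x / 2) ^ a * cos (x / 2) ^ b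

lemma sin_half_pos_of_mem_Ioo {x : ℝ} (hx : x ∈ Set.Ioo 0 π) : 0 < sin (x / 2) :=
  sin_pos_of_pos_of_lt_pi (by linarith [hx.1]) (by linarith [hx.2, pi_pos])

lemma cos_half_pos_of_mem_Ioo {x : ℝ} (hx : x ∈ Set.Ioo 0 π) : 0 < cos (x / 2) :=
  cos_pos_of_mem_Ioo ⟨by linarith [hx.1, pi_pos], by linarith [hx.2]⟩

lemma sin_eq_two_mul_sin_half_mul_cos_half (x : ℝ) : sin x = 2 * sin (x / 2) * cos (x / 2) := by
  rw [← sin_two_mul, mul_div_cancel₀ x two_ne_zero]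

lemma two_mul_mul_rpow_mul_sqrt_div {s c : ℝ} (hs : 0 < s) (hc : 0 < c) (a : ℝ) :
    (2 * s * c) ^ (a + 1 / 2) * √(s / c) = 2 ^ (a + 1 / 2) * (s ^ (a + 1) * c ^ a) := by
  have hs_split : s ^ (a + 1) = s ^ (a + 1 / 2) * s ^ (1 / 2 : ℝ) := by
    rw [← rpow_add hs]; ring_nf
  have hc_split : c ^ (a + 1 / 2) = c ^ a * c ^ (1 / 2 : ℝ) := by
    rw [← rpow_add hc]
  rw [sqrt_eq_rpow, div_rpow hs.le hc.le, mul_assoc, mul_rpow zero_le_two (by positivity),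
    mul_rpow hs.le hc.le, hs_split, hc_split]
  field_simp

lemma rpow_sin_mul_sqrt_tan_half {x : ℝ} (hx : x ∈ Set.Ioo 0 π) (a : ℝ) :
    sin x ^ (a + 1 / 2) * √(sin (x / 2) / cos (x / 2)) =
      2 ^ (a + 1 / 2) * halfAngleMonomial (a + 1) a x := by
  rw [sin_eq_two_mul_sin_half_mul_cos_half x, two_mul_mul_rpow_mul_sqrt_div
    (sin_half_pos_of_mem_Ioo hx) (cos_half_pos_of_mem_Ioo hx), halfAngleMonomial]

lemma rpow_sin_mul_sqrt_cot_half {x : ℝ} (hx : x ∈ Set.Ioo 0 π) (a : ℝ) :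
    sin x ^ (a + 1 / 2) * √(cos (x / 2) / sin (x / 2)) =
      2 ^ (a + 1 / 2) * halfAngleMonomial a (a + 1) x := by
  rw [sin_eq_two_mul_sin_half_mul_cos_half x, mul_right_comm 2,
    two_mul_mul_rpow_mul_sqrt_div (cos_half_pos_of_mem_Ioo hx) (sin_half_pos_of_mem_Ioo hx),
    halfAngleMonomial, mul_comm (cos _ ^ _)]

lemma hasDerivAt_halfAngleMonomial {x : ℝ} (hs : sin (x / 2) ≠ 0) (hc : cos (x / 2) ≠ 0)
    (a b : ℝ) :
    HasDerivAt (halfAngleMonomial a b)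
      (halfAngleMonomial a b x * (a * cos (x / 2) ^ 2 - b * sin (x / 2) ^ 2) / sin x) x := by
  have hhalf : HasDerivAt (fun y : ℝ => y / 2) (1 / 2) x := (hasDerivAt_id x).div_const 2
  refine ((hhalf.sin.rpow_const (p := a) (Or.inl hs)).mul
    (hhalf.cos.rpow_const (p := b) (Or.inl hc))).congr_deriv ?_
  rw [halfAngleMonomial, sin_eq_two_mul_sin_half_mul_cos_half x, rpow_sub_one hs,
    rpow_sub_one hc]
  field_simp
  ring

lemma halfAngleMonomial_add_one_mul_cos {x : ℝ} (hs : sin (x / 2) ≠ 0) (hc : cos (x / 2) ≠ 0)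
    (a b : ℝ) :
    halfAngleMonomial (a + 1) b x * cos (x / 2) = halfAngleMonomial a (b + 1) x * sin (x / 2) := by
  simp only [halfAngleMonomial, rpow_add_one hs, rpow_add_one hc]
  ring

theorem angular_eigenfunction_N_one_general
    (kap : ℝ) :
    let f : ℝ → ℝ := fun θ =>
      -(Real.rpow (Real.sin θ) (kap + 1 / 2)) *
        Real.sqrt (Real.cos (θ / 2) / Real.sin (θ / 2))
    let g : ℝ → ℝ := fun θ =>
      Real.rpow (Real.sin θ) (kap + 1 / 2) *
        Real.sqrt (Real.sin (θ / 2) / Real.cos (θ / 2))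
    ∀ θ ∈ Set.Ioo 0 Real.pi,
      deriv g θ + (kap / Real.sin θ) * g θ = -(kap + 1 / 2) * f θ ∧
      -deriv f θ + (kap / Real.sin θ) * f θ = -(kap + 1 / 2) * g θ := by
  intro f g θ hθ
  set K : ℝ := 2 ^ (kap + 1 / 2)
  have hg : ∀ x ∈ Set.Ioo 0 π, g x = K * halfAngleMonomial (kap + 1) kap x := fun x hx =>
    rpow_sin_mul_sqrt_tan_half hx kap
  have hf : ∀ x ∈ Set.Ioo 0 π, f x = -K * halfAngleMonomial kap (kap + 1) x := fun x hx => by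
    rw [neg_mul, ← rpow_sin_mul_sqrt_cot_half hx kap, ← neg_mul]
    rfl
  have hs := (sin_half_pos_of_mem_Ioo hθ).ne'
  have hc := (cos_half_pos_of_mem_Ioo hθ).ne'
  have hθ_nhds : Set.Ioo 0 π ∈ nhds θ := isOpen_Ioo.mem_nhds hθ
  rw [(Filter.eventuallyEq_of_mem hθ_nhds hg).deriv_eq,
    (Filter.eventuallyEq_of_mem hθ_nhds hf).deriv_eq,
    ((hasDerivAt_halfAngleMonomial hs hc _ _).const_mul K).deriv,
    ((hasDerivAt_halfAngleMonomial hs hc _ _).const_mul (-K)).deriv, hg θ hθ, hf θ hθ,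
    sin_eq_two_mul_sin_half_mul_cos_half θ]
  have hshift := halfAngleMonomial_add_one_mul_cos hs hc kap kap
  have hpyth := sin_sq_add_cos_sq (θ / 2)
  constructor
  · field_simp
    linear_combination (-(K * halfAngleMonomial (kap + 1) kap θ * kap)) * hpyth
      + (K * cos (θ / 2) * (2 * kap + 1)) * hshift
  · field_simp
    linear_combination (K * halfAngleMonomial kap (kap + 1) θ * kap) * hpyth
      + (K * sin (θ / 2) * (2 * kap + 1)) * hshift

/-- case `N = 1`, where the Jacobi polynomials are `≡ 1`: for `κ > 0`,
`S_{1,κ}(θ) = sin^{κ+1/2}θ (−√(cot(θ/2)), √(tan(θ/2)))` is an eigenfunction of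
`𝔞_κ (f,g)ᵀ = (g' + (κ/sinθ) g, −f' + (κ/sinθ) f)ᵀ` on `(0,π)` with eigenvalue
`k = −(κ + 1/2)`. -/
theorem angular_eigenfunction_N_one
    (kap : ℝ) (hkap : 0 < kap) :
    let f : ℝ → ℝ := fun θ =>
      -(Real.rpow (Real.sin θ) (kap + 1 / 2)) *
        Real.sqrt (Real.cos (θ / 2) / Real.sin (θ / 2))
    let g : ℝ → ℝ := fun θ =>
      Real.rpow (Real.sin θ) (kap + 1 / 2) *
        Real.sqrt (Real.sin (θ / 2) / Real.cos (θ / 2))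
    ∀ θ ∈ Set.Ioo 0 Real.pi,
      deriv g θ + (kap / Real.sin θ) * g θ = -(kap + 1 / 2) * f θ ∧
      -deriv f θ + (kap / Real.sin θ) * f θ = -(kap + 1 / 2) * g θ :=
  angular_eigenfunction_N_one_general kap
end
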